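/- For every integer c ≥ 0, the density ρ_c satisfies the tail asymptotic: there exists a constant K_c > 0 such that ρ_c(u) / (u^{2c}·e^{-u²/2}) → K_c as |u| → ∞. -/

import Mathlib

/-!
Write `F_n(λ) = ∫_0^∞ x^n e^{-x²/2 - iλx} dx`. For `c = k + 1` the integral representation
gives `D_{-c}(iλ) = e^{λ²/4} F_k(λ) / k!`, while `D_0(iλ) = e^{λ²/4}`. Integration by parts
yields `iλ F_n = n F_{n-1} - F_{n+1} + 0^n`, and `F_n(λ) → 0` by the Riemann–Lebesgue lemma.
Induction on this recursion gives `λ^m F_n(λ) → 0` for `m ≤ n` and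
`λ^{n+1} F_n(λ) → (-i)^{n+1} n!`, so `|λ|^c e^{-λ²/4} |D_{-c}(iλ)| → 1` for every `c`, and the
ratio tends to `K_c = 1/(√(2π) c!)`.
-/

open MeasureTheory Complex Filter

/-- The parabolic cylinder function `D₋c`, via its integral representation for `c > 0`
and by `D₀(z) = e^{-z²/4}` in the limiting case `c = 0`. -/
noncomputable def parabolicD' (c : ℝ) (z : ℂ) : ℂ :=
  if c = 0 then Complex.exp (-z ^ 2 / 4)
  else (Complex.exp (-z ^ 2 / 4) / (Real.Gamma c : ℂ)) *
    ∫ x in Set.Ioi (0 : ℝ), Complex.exp (-z * x - (x : ℂ) ^ 2 / 2) * ((x ^ (c - 1) : ℝ) : ℂ)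

/-- The Askey–Wimp–Kerov density `ρ_c(λ) = 1/(√(2π)·Γ(1+c)·|D₋c(iλ)|²)`. -/
noncomputable def awkDensity' (c : ℝ) (l : ℝ) : ℝ :=
  1 / (Real.sqrt (2 * Real.pi) * Real.Gamma (1 + c)
    * ‖parabolicD' c (Complex.I * l)‖ ^ 2)

open Set Topology FourierTransform
open scoped Nat

noncomputable def gaussWave (l x : ℝ) : ℂ :=
  Complex.exp (-(x : ℂ) ^ 2 / 2 - I * l * x)

noncomputable def halfGaussianFourier (n : ℕ) (l : ℝ) : ℂ :=
  ∫ x in Ioi (0 : ℝ), (x : ℂ) ^ n * gaussWave l x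

lemma norm_gaussWave (l x : ℝ) : ‖gaussWave l x‖ = Real.exp (-x ^ 2 / 2) := by
  simp [gaussWave, Complex.norm_exp, ← Complex.ofReal_pow]

lemma hasDerivAt_gaussWave (l x : ℝ) :
    HasDerivAt (gaussWave l) ((-x - I * l) * gaussWave l x) x := by
  have h : HasDerivAt (fun z : ℂ => -z ^ 2 / 2 - I * l * z) (-(x : ℂ) - I * l) x := by
    refine (((hasDerivAt_pow 2 (x : ℂ)).neg.div_const 2).sub
      ((hasDerivAt_id (x : ℂ)).const_mul (I * (l : ℂ)))).congr_deriv ?_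
    push_cast
    ring
  rw [mul_comm]
  exact h.cexp.comp_ofReal

lemma norm_pow_mul_gaussWave (n : ℕ) (l x : ℝ) :
    ‖(x : ℂ) ^ n * gaussWave l x‖ = |x| ^ (n : ℝ) * Real.exp (-(1 / 2) * x ^ 2) := by
  rw [norm_mul, norm_gaussWave, norm_pow, Complex.norm_real, Real.norm_eq_abs, Real.rpow_natCast]
  ring_nf

lemma integrableOn_pow_mul_gaussWave (n : ℕ) (l : ℝ) :
    IntegrableOn (fun x : ℝ => (x : ℂ) ^ n * gaussWave l x) (Ioi 0) := by
  refine Integrable.mono' (integrableOn_rpow_mul_exp_neg_mul_sq one_half_pos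
    (neg_one_lt_zero.trans_le n.cast_nonneg)) ?_ ?_
  · exact (by unfold gaussWave; fun_prop :
      Continuous fun x : ℝ => (x : ℂ) ^ n * gaussWave l x).aestronglyMeasurable
  · filter_upwards [ae_restrict_mem measurableSet_Ioi] with x hx
    rw [norm_pow_mul_gaussWave, abs_of_pos hx]

lemma tendsto_pow_mul_gaussWave_atTop (n : ℕ) (l : ℝ) :
    Tendsto (fun x : ℝ => (x : ℂ) ^ n * gaussWave l x) atTop (𝓝 0) := by
  refine squeeze_zero_norm (fun x => (norm_pow_mul_gaussWave n l x).le) ?_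
  exact (tendsto_rpow_abs_mul_exp_neg_mul_sq_cocompact one_half_pos n).mono_left
    atTop_le_cocompact

lemma halfGaussianFourier_eq_fourier (n : ℕ) (l : ℝ) :
    halfGaussianFourier n l =
      𝓕 ((Ioi 0).indicator fun x : ℝ => (x : ℂ) ^ n * Complex.exp (-(x : ℂ) ^ 2 / 2))
        (l / (2 * Real.pi)) := by
  rw [Real.fourier_real_eq_integral_exp_smul, halfGaussianFourier,
    ← integral_indicator measurableSet_Ioi]
  congr 1 with x
  by_cases hx : x ∈ Ioi 0
  · rw [indicator_of_mem hx, indicator_of_mem hx, gaussWave, smul_eq_mul, mul_left_comm,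
      ← Complex.exp_add]
    congr 2
    push_cast
    field_simp
    ring
  · simp [indicator_of_notMem hx]

lemma tendsto_halfGaussianFourier_cocompact (n : ℕ) :
    Tendsto (halfGaussianFourier n) (cocompact ℝ) (𝓝 0) := by
  simp_rw [funext (halfGaussianFourier_eq_fourier n), div_eq_mul_inv]
  exact (Real.zero_at_infty_fourier _).comp
    (tendsto_cocompact_mul_right₀ (inv_ne_zero (by positivity)))

-- At `n = 0` the truncated `n - 1` is harmless: its coefficient `n` vanishes.
lemma I_mul_halfGaussianFourier (n : ℕ) (l : ℝ) :
    I * l * halfGaussianFourier n l =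
      n * halfGaussianFourier (n - 1) l - halfGaussianFourier (n + 1) l + 0 ^ n := by
  have hderiv (x : ℝ) : HasDerivAt (fun y : ℝ => (y : ℂ) ^ n * gaussWave l y)
      (n * ((x : ℂ) ^ (n - 1) * gaussWave l x) - (x : ℂ) ^ (n + 1) * gaussWave l x
        - I * l * ((x : ℂ) ^ n * gaussWave l x)) x :=
    ((hasDerivAt_pow n (x : ℂ)).comp_ofReal.mul (hasDerivAt_gaussWave l x)).congr_deriv
      (by ring)
  have hint := integrableOn_pow_mul_gaussWave
  have hlow :
      IntegrableOn (fun x : ℝ => (n : ℂ) * ((x : ℂ) ^ (n - 1) * gaussWave l x)) (Ioi 0) :=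
    (hint _ l).const_mul _
  have hmid : IntegrableOn (fun x : ℝ => I * l * ((x : ℂ) ^ n * gaussWave l x)) (Ioi 0) :=
    (hint _ l).const_mul _
  have hibp := integral_Ioi_of_hasDerivAt_of_tendsto
    (hderiv 0).continuousAt.continuousWithinAt (fun x _ => hderiv x)
    ((hlow.sub (hint (n + 1) l)).sub hmid) (tendsto_pow_mul_gaussWave_atTop n l)
  rw [integral_sub ?_ hmid, integral_sub hlow (hint (n + 1) l), integral_const_mul,
    integral_const_mul] at hibp
  · have hzero : ((0 : ℝ) : ℂ) ^ n * gaussWave l 0 = 0 ^ n := by simp [gaussWave]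
    rw [hzero] at hibp
    unfold halfGaussianFourier
    linear_combination -hibp
  · exact hlow.sub (hint (n + 1) l)

lemma pow_succ_mul_halfGaussianFourier {n : ℕ} (hn : n ≠ 0) (m : ℕ) (l : ℝ) :
    (l : ℂ) ^ (m + 1) * halfGaussianFourier n l =
      -I * (n * ((l : ℂ) ^ m * halfGaussianFourier (n - 1) l) -
        (l : ℂ) ^ m * halfGaussianFourier (n + 1) l) := by
  have h := I_mul_halfGaussianFourier n l
  rw [zero_pow hn, add_zero] at h
  linear_combination
    (-I * (l : ℂ) ^ m) * h + ((l : ℂ) ^ (m + 1) * halfGaussianFourier n l) * I_mul_I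

lemma tendsto_pow_mul_halfGaussianFourier_zero {m n : ℕ} (hmn : m ≤ n) :
    Tendsto (fun l : ℝ => (l : ℂ) ^ m * halfGaussianFourier n l) (cocompact ℝ) (𝓝 0) := by
  induction m generalizing n with
  | zero => simpa using tendsto_halfGaussianFourier_cocompact n
  | succ m ih =>
    have hlim := (((ih (n := n - 1) (by omega)).const_mul (n : ℂ)).sub
      (ih (n := n + 1) (by omega))).const_mul (-I)
    simp only [mul_zero, sub_zero] at hlim
    exact hlim.congr fun l => (pow_succ_mul_halfGaussianFourier (by omega) m l).symm

lemma tendsto_pow_succ_mul_halfGaussianFourier (n : ℕ) :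
    Tendsto (fun l : ℝ => (l : ℂ) ^ (n + 1) * halfGaussianFourier n l) (cocompact ℝ)
      (𝓝 ((-I) ^ (n + 1) * n !)) := by
  induction n with
  | zero =>
    have hlim := ((tendsto_halfGaussianFourier_cocompact 1).const_mul I).const_add (-I)
    rw [mul_zero, add_zero] at hlim
    rw [zero_add, pow_one, Nat.factorial_zero, Nat.cast_one, mul_one]
    refine hlim.congr fun l => ?_
    have h := I_mul_halfGaussianFourier 0 l
    simp only [CharP.cast_eq_zero, zero_mul, zero_sub, pow_zero, zero_add] at h
    linear_combination I * h - ((l : ℂ) * halfGaussianFourier 0 l) * I_mul_I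
  | succ n ih =>
    have hlim := ((ih.const_mul ((n : ℂ) + 1)).sub (tendsto_pow_mul_halfGaussianFourier_zero
      (m := n + 1) (n := n + 2) (by omega))).const_mul (-I)
    have hval :
        -I * (((n : ℂ) + 1) * ((-I) ^ (n + 1) * n !) - 0) = (-I) ^ (n + 2) * (n + 1)! := by
      push_cast [Nat.factorial_succ]
      ring
    rw [hval] at hlim
    refine hlim.congr fun l => ?_
    have h := pow_succ_mul_halfGaussianFourier (n := n + 1) (by omega) (n + 1) l
    rw [Nat.add_sub_cancel] at h
    push_cast at h ⊢
    linear_combination -h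

lemma neg_sq_I_mul_div_four (u : ℝ) : -(I * u) ^ 2 / 4 = ((u ^ 2 / 4 : ℝ) : ℂ) := by
  rw [mul_pow, I_sq]
  push_cast
  ring

lemma parabolicD'_zero_I_mul (u : ℝ) : parabolicD' 0 (I * u) = Real.exp (u ^ 2 / 4) := by
  rw [parabolicD', if_pos rfl, neg_sq_I_mul_div_four, Complex.ofReal_exp]

lemma parabolicD'_succ_I_mul (k : ℕ) (u : ℝ) :
    parabolicD' ((k + 1 : ℕ) : ℝ) (I * u) =
      Real.exp (u ^ 2 / 4) / k ! * halfGaussianFourier k u := by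
  rw [parabolicD', if_neg (by positivity), neg_sq_I_mul_div_four, Complex.ofReal_exp,
    Nat.cast_add_one, Real.Gamma_nat_eq_factorial, halfGaussianFourier]
  congr 1
  refine setIntegral_congr_fun measurableSet_Ioi fun x _ => ?_
  rw [add_sub_cancel_right, Real.rpow_natCast, gaussWave, mul_comm]
  push_cast
  ring_nf

lemma tendsto_abs_pow_mul_exp_mul_norm_parabolicD'_I_mul (c : ℕ) :
    Tendsto (fun u : ℝ => |u| ^ c * Real.exp (-u ^ 2 / 4) * ‖parabolicD' c (I * u)‖)
      (cocompact ℝ) (𝓝 1) := by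
  rcases c with _ | k
  · refine tendsto_const_nhds.congr fun u => ?_
    rw [Nat.cast_zero, parabolicD'_zero_I_mul, Complex.norm_real,
      Real.norm_of_nonneg (Real.exp_pos _).le, pow_zero, one_mul, ← Real.exp_add, neg_div,
      neg_add_cancel, Real.exp_zero]
  · have hlim := (tendsto_pow_succ_mul_halfGaussianFourier k).norm.div_const (k ! : ℝ)
    rw [norm_mul, norm_pow, norm_neg, norm_I, one_pow, one_mul, Complex.norm_natCast,
      div_self (by positivity)] at hlim
    refine hlim.congr fun u => ?_
    simp only [parabolicD'_succ_I_mul, norm_mul, norm_div, norm_pow, Complex.norm_real,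
      Complex.norm_natCast, Real.norm_eq_abs, abs_of_pos (Real.exp_pos _)]
    field_simp
    rw [mul_assoc, ← Real.exp_add, neg_add_cancel, Real.exp_zero, mul_one]

lemma awkDensity'_div_eq (c : ℕ) (u : ℝ) :
    awkDensity' c u / (u ^ (2 * c) * Real.exp (-u ^ 2 / 2)) =
      1 / (√(2 * Real.pi) * c !) /
        (|u| ^ c * Real.exp (-u ^ 2 / 4) * ‖parabolicD' c (I * u)‖) ^ 2 := by
  have hweight :
      u ^ (2 * c) * Real.exp (-u ^ 2 / 2) = (|u| ^ c * Real.exp (-u ^ 2 / 4)) ^ 2 := by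
    rw [mul_pow, ← pow_mul, ← Real.exp_nat_mul, pow_abs, mul_comm c 2,
      abs_of_nonneg ((even_two_mul c).pow_nonneg u)]
    push_cast
    ring_nf
  rw [awkDensity', hweight, add_comm, Real.Gamma_nat_eq_factorial]
  ring

/-- for every integer `c ≥ 0`, there is `K_c > 0` with
`ρ_c(u) / (u^{2c}·e^{-u²/2}) → K_c` as `|u| → ∞`. -/
theorem stmt_17 (c : ℕ) :
    ∃ K : ℝ, 0 < K ∧
      Tendsto (fun u : ℝ => awkDensity' (c : ℝ) u / (u ^ (2 * c) * Real.exp (-u ^ 2 / 2)))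
        (Filter.atTop ⊔ Filter.atBot) (nhds K) := by
  refine ⟨1 / (√(2 * Real.pi) * c !), by positivity, ?_⟩
  rw [sup_comm, ← cocompact_eq_atBot_atTop]
  have hlim := tendsto_const_nhds (x := 1 / (√(2 * Real.pi) * c !)).div
    ((tendsto_abs_pow_mul_exp_mul_norm_parabolicD'_I_mul c).pow 2) (by norm_num)
  rw [one_pow, div_one] at hlim
  exact hlim.congr fun u => (awkDensity'_div_eq c u).symm
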